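/- arXiv:1611.00852 — 2 statements merged into one kernel-verified Lean document; each statement's English description precedes it below -/
import Mathlib

section
/- Let $\mathfrak{q}$ be a finite-dimensional complex Lie algebra with Poisson bracket on $S(\mathfrak{q})$ extending the Lie bracket (the Lie–Poisson structure). If $P, Q \in S(\mathfrak{q})^{\mathfrak{q}}$ are invariant polynomials and $\chi \in \mathfrak{q}^*$, then for all $i, j \geq 0$ the shifted elements $D_\chi^i P$ and $D_\chi^j Q$ Poisson-commute: $\{D_\chi^i P, D_\chi^j Q\} = 0$. Consequently, the Mishchenko–Fomenko subalgebra $\bar{\mathcal{A}}_\chi \subseteq S(\mathfrak{q})$ generated by all $\chi$-shifts $D_\chi^i P$ of invariants $P$ is Poisson-commutative. -/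
/-!
A bracket on `S(q) = k[X_i]` that is a skew biderivation is determined by its values on the
generators: `{F, G} = ∑ i j, ∂ᵢF ∂ⱼG {Xᵢ, Xⱼ}`. A constant-coefficient derivation `D = D_χ`
commutes with every `∂ᵢ`, so `D {F, G} = {D F, G} + {F, D G} + {F, G}'`, where `{ , }'` has the
constant coefficients `D {Xᵢ, Xⱼ}` and hence is `D`-equivariant. For `P` central this gives
`{D^(m+1) P, F} = -(m+1) {D^m P, F}'`. Shifting `P` or shifting `Q` one more time therefore
both compute `{D^m P, D^n Q}'` up to the factors `m+1` and `n+1`, and an induction on `m` shows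
`{D^m P, D^n Q} = 0`. Finally, each slot of the bracket is a derivation, so the bracket vanishes
on the algebra generated by a set on which it vanishes.
-/

open MvPolynomial

structure IsAlmostPoissonBracket (R : Type*) {A : Type*} [CommRing R] [CommRing A] [Algebra R A]
    (br : A → A → A) : Prop where
  add_left : ∀ F G H, br (F + G) H = br F H + br G H
  smul_left : ∀ (c : R) F G, br (c • F) G = c • br F G
  skew : ∀ F G, br F G = -br G F
  leibniz : ∀ F G H, br F (G * H) = br F G * H + G * br F H

namespace IsAlmostPoissonBracket

variable {R A : Type*} [CommRing R] [CommRing A] [Algebra R A] {br : A → A → A}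
  (hbr : IsAlmostPoissonBracket R br)
include hbr

theorem mul_left (F G H : A) : br (F * G) H = F * br G H + G * br F H := by
  rw [hbr.skew, hbr.leibniz, hbr.skew H F, hbr.skew H G]; ring

def leftDerivation (G : A) : Derivation R A A :=
  Derivation.mk'
    { toFun := fun F => br F G
      map_add' := fun F F' => hbr.add_left F F' G
      map_smul' := fun c F => hbr.smul_left c F G }
    fun F F' => by simp [hbr.mul_left, smul_eq_mul]

theorem leftDerivation_apply (G F : A) : hbr.leftDerivation G F = br F G := rfl

theorem eq_zero_of_mem_adjoin {S : Set A} (hS : ∀ F ∈ S, ∀ G ∈ S, br F G = 0) {F G : A}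
    (hF : F ∈ Algebra.adjoin R S) (hG : G ∈ Algebra.adjoin R S) : br F G = 0 := by
  have hvanish : ∀ G, (∀ F ∈ S, br F G = 0) → ∀ F ∈ Algebra.adjoin R S, br F G = 0 :=
    fun G h => Derivation.eqOn_adjoin (D1 := hbr.leftDerivation G) (D2 := 0) h
  have hS_adjoin : ∀ G ∈ S, ∀ F ∈ Algebra.adjoin R S, br G F = 0 := fun G hG F hF => by
    rw [hbr.skew, hvanish G (fun F' hF' => hS F' hF' G hG) F hF, neg_zero]
  exact hvanish G (fun F' hF' => hS_adjoin F' hF' G hG) F hF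

end IsAlmostPoissonBracket

theorem Derivation.sum_apply {R A M κ : Type*} [CommSemiring R] [CommSemiring A] [Algebra R A]
    [AddCommMonoid M] [Module A M] [Module R M] (s : Finset κ) (D : κ → Derivation R A M) (a : A) :
    (∑ k ∈ s, D k) a = ∑ k ∈ s, D k a := by
  rw [← Derivation.coeFnAddMonoidHom_apply, map_sum, Finset.sum_apply]
  rfl

section MvPolynomial

variable {R ι : Type*} [CommRing R] [Fintype ι]

noncomputable def coordBracket (L : ι → ι → MvPolynomial ι R) (F G : MvPolynomial ι R) :
    MvPolynomial ι R :=
  ∑ i, ∑ j, pderiv i F * pderiv j G * L i j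

namespace IsAlmostPoissonBracket

variable {br : MvPolynomial ι R → MvPolynomial ι R → MvPolynomial ι R}
  (hbr : IsAlmostPoissonBracket R br)
include hbr

theorem eq_sum_pderiv_mul (F G : MvPolynomial ι R) : br F G = ∑ i, pderiv i F * br (X i) G := by
  classical
  have : hbr.leftDerivation G = ∑ i, br (X i) G • pderiv i :=
    derivation_ext fun k => by
      simp [leftDerivation_apply, Derivation.sum_apply, pderiv_X, Pi.single_apply]
  simpa [leftDerivation_apply, Derivation.sum_apply, mul_comm] using DFunLike.congr_fun this F

theorem eq_coordBracket (F G : MvPolynomial ι R) :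
    br F G = coordBracket (fun i j => br (X i) (X j)) F G := by
  rw [hbr.eq_sum_pderiv_mul]
  refine Finset.sum_congr rfl fun i _ => ?_
  rw [hbr.skew, hbr.eq_sum_pderiv_mul, ← Finset.sum_neg_distrib, Finset.mul_sum]
  refine Finset.sum_congr rfl fun j _ => ?_
  rw [hbr.skew (X j)]; ring

theorem eq_zero_of_forall_X {P : MvPolynomial ι R} (hP : ∀ i, br (X i) P = 0)
    (F : MvPolynomial ι R) : br P F = 0 := by
  simp [hbr.skew P, hbr.eq_sum_pderiv_mul F, hP]

end IsAlmostPoissonBracket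

section CoordBracket

variable {L : ι → ι → MvPolynomial ι R}

theorem coordBracket_comm (hL : ∀ i j, L j i = -L i j) (F G : MvPolynomial ι R) :
    coordBracket L G F = -coordBracket L F G := by
  rw [coordBracket, Finset.sum_comm, coordBracket, ← Finset.sum_neg_distrib]
  refine Finset.sum_congr rfl fun i _ => ?_
  rw [← Finset.sum_neg_distrib]
  refine Finset.sum_congr rfl fun j _ => ?_
  rw [hL]; ring

theorem coordBracket_zero (F G : MvPolynomial ι R) :
    coordBracket (0 : ι → ι → MvPolynomial ι R) F G = 0 := by
  simp [coordBracket]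

variable (D : Derivation R (MvPolynomial ι R) (MvPolynomial ι R))
  (hD : ∀ i F, D (pderiv i F) = pderiv i (D F))
include hD

theorem derivation_coordBracket (L : ι → ι → MvPolynomial ι R) (F G : MvPolynomial ι R) :
    D (coordBracket L F G) =
      coordBracket L (D F) G + coordBracket L F (D G) +
        coordBracket (fun i j => D (L i j)) F G := by
  simp only [coordBracket, map_sum, Derivation.leibniz, hD, smul_eq_mul, ← Finset.sum_add_distrib]
  refine Finset.sum_congr rfl fun i _ => Finset.sum_congr rfl fun j _ => ?_
  ring

theorem coordBracket_iterate_succ_left (hDL : ∀ i j, D (D (L i j)) = 0) {P : MvPolynomial ι R}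
    (hP : ∀ F, coordBracket L P F = 0) (m : ℕ) (F : MvPolynomial ι R) :
    coordBracket L (D^[m + 1] P) F =
      -((m + 1) • coordBracket (fun i j => D (L i j)) (D^[m] P) F) := by
  have hL_shift : ∀ F G, coordBracket L (D F) G =
      D (coordBracket L F G) - coordBracket L F (D G) -
        coordBracket (fun i j => D (L i j)) F G := by
    intro F G; rw [derivation_coordBracket D hD]; ring
  have hM_shift : ∀ F G, D (coordBracket (fun i j => D (L i j)) F G) =
      coordBracket (fun i j => D (L i j)) (D F) G +
        coordBracket (fun i j => D (L i j)) F (D G) := by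
    have hDDL : (fun i j => D (D (L i j))) = 0 := funext₂ hDL
    intro F G; rw [derivation_coordBracket D hD, hDDL, coordBracket_zero, add_zero]
  induction m generalizing F with
  | zero =>
    rw [Function.iterate_one, Function.iterate_zero_apply, hL_shift, hP, hP, map_zero,
      zero_add, one_smul, sub_zero, zero_sub]
  | succ m ih =>
    rw [Function.iterate_succ_apply', hL_shift, ih, ih, map_neg, map_nsmul, hM_shift,
      ← Function.iterate_succ_apply' D]
    simp only [succ_nsmul, smul_add, Nat.succ_eq_add_one]
    abel

theorem coordBracket_iterate_iterate_eq_zero [IsAddTorsionFree R] (hL : ∀ i j, L j i = -L i j)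
    (hDL : ∀ i j, D (D (L i j)) = 0) {P Q : MvPolynomial ι R}
    (hP : ∀ F, coordBracket L P F = 0) (hQ : ∀ F, coordBracket L Q F = 0) (m n : ℕ) :
    coordBracket L (D^[m] P) (D^[n] Q) = 0 := by
  induction m generalizing n with
  | zero => exact hP _
  | succ m ih =>
    have hM : ∀ i j, D (L j i) = -D (L i j) := fun i j => by rw [hL, map_neg]
    have hshift := coordBracket_iterate_succ_left D hD hDL hQ n (D^[m] P)
    rw [coordBracket_comm hL, ih, neg_zero, eq_comm, neg_eq_zero, smul_eq_zero] at hshift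
    rw [coordBracket_iterate_succ_left D hD hDL hP, coordBracket_comm hM,
      hshift.resolve_left n.succ_ne_zero]
    simp

end CoordBracket

section DirDeriv

noncomputable def dirDeriv (c : ι → R) : Derivation R (MvPolynomial ι R) (MvPolynomial ι R) :=
  ∑ i, c i • pderiv i

theorem dirDeriv_apply (c : ι → R) (F : MvPolynomial ι R) :
    dirDeriv c F = ∑ i, c i • pderiv i F := by
  simp [dirDeriv, Derivation.sum_apply]

theorem dirDeriv_X (c : ι → R) (k : ι) : dirDeriv c (X k) = C (c k) := by
  classical
  simp [dirDeriv_apply, pderiv_X, Pi.single_apply, smul_eq_C_mul]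

theorem dirDeriv_pderiv (c : ι → R) (i : ι) (F : MvPolynomial ι R) :
    dirDeriv c (pderiv i F) = pderiv i (dirDeriv c F) := by
  classical
  have hcomm : ⁅dirDeriv c, pderiv i⁆ = 0 := derivation_ext fun k => by
    rw [Derivation.commutator_apply]
    simp [dirDeriv_X, pderiv_X, Pi.single_apply, apply_ite]
  have := DFunLike.congr_fun hcomm F
  rwa [Derivation.commutator_apply, Derivation.zero_apply, sub_eq_zero] at this

theorem dirDeriv_dirDeriv_linear (c r : ι → R) :
    dirDeriv c (dirDeriv c (∑ k, r k • (X k : MvPolynomial ι R))) = 0 := by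
  simp [dirDeriv_X]

end DirDeriv

end MvPolynomial

theorem stmt1_general {q : Type*} [LieRing q] [LieAlgebra ℂ q]
    {ι : Type*} [Fintype ι] (b : Module.Basis ι ℂ q)
    (χ : Module.Dual ℂ q)
    (Dχ : MvPolynomial ι ℂ → MvPolynomial ι ℂ)
    (hD : ∀ F, Dχ F = ∑ i, χ (b i) • MvPolynomial.pderiv i F)
    (br : MvPolynomial ι ℂ → MvPolynomial ι ℂ → MvPolynomial ι ℂ)
    (hbr_add_left : ∀ F G H, br (F + G) H = br F H + br G H)
    (hbr_smul_left : ∀ (c : ℂ) F G, br (c • F) G = c • br F G)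
    (hbr_skew : ∀ F G, br F G = - br G F)
    (hbr_leibniz : ∀ F G H, br F (G * H) = br F G * H + G * br F H)
    (hbr_gen : ∀ i j, br (X i) (X j) =
      ∑ k, (b.repr ⁅b i, b j⁆ k) • (X k : MvPolynomial ι ℂ)) :
    (∀ P Q : MvPolynomial ι ℂ,
      (∀ i, br (X i) P = 0) → (∀ i, br (X i) Q = 0) →
      ∀ m n : ℕ, br (Dχ^[m] P) (Dχ^[n] Q) = 0) ∧
    (∀ F G : MvPolynomial ι ℂ,
      F ∈ Algebra.adjoin ℂ
        {F' | ∃ (P : MvPolynomial ι ℂ) (m : ℕ), (∀ i, br (X i) P = 0) ∧ F' = Dχ^[m] P} →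
      G ∈ Algebra.adjoin ℂ
        {F' | ∃ (P : MvPolynomial ι ℂ) (m : ℕ), (∀ i, br (X i) P = 0) ∧ F' = Dχ^[m] P} →
      br F G = 0) := by
  have hbr : IsAlmostPoissonBracket ℂ br := ⟨hbr_add_left, hbr_smul_left, hbr_skew, hbr_leibniz⟩
  have hDχ : Dχ = dirDeriv fun i => χ (b i) := funext fun F => by rw [hD, dirDeriv_apply]
  have hL : ∀ i j, br (X j) (X i) = -br (X i) (X j) := fun i j => hbr_skew _ _
  have hDL : ∀ i j,
      dirDeriv (fun i => χ (b i)) (dirDeriv (fun i => χ (b i)) (br (X i) (X j))) = 0 := by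
    intro i j; rw [hbr_gen]; exact dirDeriv_dirDeriv_linear _ _
  have shifts_commute : ∀ P Q : MvPolynomial ι ℂ, (∀ i, br (X i) P = 0) → (∀ i, br (X i) Q = 0) →
      ∀ m n : ℕ, br (Dχ^[m] P) (Dχ^[n] Q) = 0 := by
    intro P Q hP hQ m n
    rw [hDχ, hbr.eq_coordBracket]
    refine coordBracket_iterate_iterate_eq_zero _ (dirDeriv_pderiv _) hL hDL ?_ ?_ m n
    · exact fun F => (hbr.eq_coordBracket P F).symm.trans (hbr.eq_zero_of_forall_X hP F)
    · exact fun F => (hbr.eq_coordBracket Q F).symm.trans (hbr.eq_zero_of_forall_X hQ F)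
  refine ⟨shifts_commute, fun F G hF hG => hbr.eq_zero_of_mem_adjoin ?_ hF hG⟩
  rintro _ ⟨P, m, hP, rfl⟩ _ ⟨Q, n, hQ, rfl⟩
  exact shifts_commute P Q hP hQ m n

/-- Let `q` be a finite-dimensional complex Lie algebra with basis `b`,
and identify `S(q)` with `MvPolynomial ι ℂ`.  Let `br` be the Lie–Poisson bracket on
`S(q)`: a bilinear, antisymmetric biderivation satisfying `{X i, X j} = ⁅b i, b j⁆`
(expanded in coordinates).  If `P, Q` are invariant (`{X i, P} = 0` for all `i`) and
`χ ∈ q*`, then all the `χ`-shifts `D_χ^i P` and `D_χ^j Q` Poisson-commute; consequently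
the Mishchenko–Fomenko subalgebra generated by all shifts of invariants is
Poisson-commutative. -/
theorem stmt1 {q : Type*} [LieRing q] [LieAlgebra ℂ q] [FiniteDimensional ℂ q]
    {ι : Type*} [Fintype ι] [DecidableEq ι] (b : Module.Basis ι ℂ q)
    (χ : Module.Dual ℂ q)
    (Dχ : MvPolynomial ι ℂ → MvPolynomial ι ℂ)
    (hD : ∀ F, Dχ F = ∑ i, χ (b i) • MvPolynomial.pderiv i F)
    (br : MvPolynomial ι ℂ → MvPolynomial ι ℂ → MvPolynomial ι ℂ)
    (hbr_add_left : ∀ F G H, br (F + G) H = br F H + br G H)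
    (hbr_smul_left : ∀ (c : ℂ) F G, br (c • F) G = c • br F G)
    (hbr_skew : ∀ F G, br F G = - br G F)
    (hbr_leibniz : ∀ F G H, br F (G * H) = br F G * H + G * br F H)
    (hbr_gen : ∀ i j, br (X i) (X j) =
      ∑ k, (b.repr ⁅b i, b j⁆ k) • (X k : MvPolynomial ι ℂ)) :
    (∀ P Q : MvPolynomial ι ℂ,
      (∀ i, br (X i) P = 0) → (∀ i, br (X i) Q = 0) →
      ∀ m n : ℕ, br (Dχ^[m] P) (Dχ^[n] Q) = 0) ∧
    (∀ F G : MvPolynomial ι ℂ,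
      F ∈ Algebra.adjoin ℂ
        {F' | ∃ (P : MvPolynomial ι ℂ) (m : ℕ), (∀ i, br (X i) P = 0) ∧ F' = Dχ^[m] P} →
      G ∈ Algebra.adjoin ℂ
        {F' | ∃ (P : MvPolynomial ι ℂ) (m : ℕ), (∀ i, br (X i) P = 0) ∧ F' = Dχ^[m] P} →
      br F G = 0) :=
  stmt1_general b χ Dχ hD br hbr_add_left hbr_smul_left hbr_skew hbr_leibniz hbr_gen
end

section
/- Let $\mathfrak{g} = \mathfrak{sl}_2(\mathbb{C}) \ltimes H$ be the $6$-dimensional Lie algebra with basis $\{E, H, F, u, v, e\}$ where $\{E,H,F\}$ is a standard $\mathfrak{sl}_2$-triple, $[E,v]=u$, $[F,u]=v$, $[H,u]=u$, $[H,v]=-v$, $[u,v]=e$, $[E,u]=[F,v]=0$, and $e$ is central. (This is the centralizer of a minimal nilpotent element in $\mathfrak{sp}_4(\mathbb{C})$.) Then the elements $F_1 = e$ and $F_2 = (4EF + H^2)e + 2Ev^2 + 2uvH - 2Fu^2$ of the symmetric algebra $S(\mathfrak{g})$ are invariant under the adjoint action of $\mathfrak{g}$, i.e., they lie in the Poisson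 center of $S(\mathfrak{g})$. -/
open MvPolynomial

/- We identify the symmetric algebra `S(g)` of the 6-dimensional Lie algebra
`g = sl₂ ⋉ H` with basis `E, H, F, u, v, e` (indices `0,…,5`) with
`MvPolynomial (Fin 6) ℂ`.  The structure constants are encoded in the matrix of
brackets `structMat i j = {X i, X j}`, determined by `[H,E] = 2E`, `[H,F] = -2F`,
`[E,F] = H`, `[E,v] = u`, `[F,u] = v`, `[H,u] = u`, `[H,v] = -v`, `[u,v] = e`,
`[E,u] = [F,v] = 0`, and `e` central. -/
noncomputable def structMat : Fin 6 → Fin 6 → MvPolynomial (Fin 6) ℂ :=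
  ![![0, -(2 * X 0), X 1, 0, X 3, 0],
    ![2 * X 0, 0, -(2 * X 2), X 3, -X 4, 0],
    ![-X 1, 2 * X 2, 0, X 4, 0, 0],
    ![0, -X 3, -X 4, 0, X 5, 0],
    ![-X 3, X 4, 0, -X 5, 0, 0],
    ![0, 0, 0, 0, 0, 0]]

/-- The Lie–Poisson bracket on `S(g) = MvPolynomial (Fin 6) ℂ`: the unique Poisson
bracket with `{X i, X j} = structMat i j`. -/
noncomputable def poissonBr (P Q : MvPolynomial (Fin 6) ℂ) : MvPolynomial (Fin 6) ℂ :=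
  ∑ i : Fin 6, ∑ j : Fin 6,
    structMat i j * MvPolynomial.pderiv i P * MvPolynomial.pderiv j Q

lemma sm00 : structMat 0 0 = 0 := rfl

lemma sm01 : structMat 0 1 = -(2 * X 0) := rfl

lemma sm02 : structMat 0 2 = X 1 := rfl

lemma sm03 : structMat 0 3 = 0 := rfl

lemma sm04 : structMat 0 4 = X 3 := rfl

lemma sm05 : structMat 0 5 = 0 := rfl

lemma sm10 : structMat 1 0 = 2 * X 0 := rfl

lemma sm11 : structMat 1 1 = 0 := rfl

lemma sm12 : structMat 1 2 = -(2 * X 2) := rfl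

lemma sm13 : structMat 1 3 = X 3 := rfl

lemma sm14 : structMat 1 4 = -X 4 := rfl

lemma sm15 : structMat 1 5 = 0 := rfl

lemma sm20 : structMat 2 0 = -X 1 := rfl

lemma sm21 : structMat 2 1 = 2 * X 2 := rfl

lemma sm22 : structMat 2 2 = 0 := rfl

lemma sm23 : structMat 2 3 = X 4 := rfl

lemma sm24 : structMat 2 4 = 0 := rfl

lemma sm25 : structMat 2 5 = 0 := rfl

lemma sm30 : structMat 3 0 = 0 := rfl

lemma sm31 : structMat 3 1 = -X 3 := rfl

lemma sm32 : structMat 3 2 = -X 4 := rfl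

lemma sm33 : structMat 3 3 = 0 := rfl

lemma sm34 : structMat 3 4 = X 5 := rfl

lemma sm35 : structMat 3 5 = 0 := rfl

lemma sm40 : structMat 4 0 = -X 3 := rfl

lemma sm41 : structMat 4 1 = X 4 := rfl

lemma sm42 : structMat 4 2 = 0 := rfl

lemma sm43 : structMat 4 3 = -X 5 := rfl

lemma sm44 : structMat 4 4 = 0 := rfl

lemma sm45 : structMat 4 5 = 0 := rfl

lemma sm50 : structMat 5 0 = 0 := rfl

lemma sm51 : structMat 5 1 = 0 := rfl

lemma sm52 : structMat 5 2 = 0 := rfl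

lemma sm53 : structMat 5 3 = 0 := rfl

lemma sm54 : structMat 5 4 = 0 := rfl

lemma sm55 : structMat 5 5 = 0 := rfl

lemma dP0 : pderiv 0 ((4 * X 0 * X 2 + X 1 ^ 2) * X 5 + 2 * X 0 * X 4 ^ 2 +
      2 * X 3 * X 4 * X 1 - 2 * X 2 * X 3 ^ 2 : MvPolynomial (Fin 6) ℂ) = 4*X 2*X 5 + 2*X 4^2 := by
  simp [pderiv_mul, pderiv_pow, pderiv_X, Pi.single_apply,
    (map_ofNat (C : ℂ →+* MvPolynomial (Fin 6) ℂ) 4).symm,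
    (map_ofNat (C : ℂ →+* MvPolynomial (Fin 6) ℂ) 2).symm, pderiv_C,
    show (C 4 : MvPolynomial (Fin 6) ℂ) = C 2 * C 2 by rw [← map_mul]; norm_num]
  try ring

lemma dP1 : pderiv 1 ((4 * X 0 * X 2 + X 1 ^ 2) * X 5 + 2 * X 0 * X 4 ^ 2 +
      2 * X 3 * X 4 * X 1 - 2 * X 2 * X 3 ^ 2 : MvPolynomial (Fin 6) ℂ) = 2*X 1*X 5 + 2*X 3*X 4 := by
  simp [pderiv_mul, pderiv_pow, pderiv_X, Pi.single_apply,
    (map_ofNat (C : ℂ →+* MvPolynomial (Fin 6) ℂ) 4).symm,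
    (map_ofNat (C : ℂ →+* MvPolynomial (Fin 6) ℂ) 2).symm, pderiv_C,
    show (C 4 : MvPolynomial (Fin 6) ℂ) = C 2 * C 2 by rw [← map_mul]; norm_num]
  try ring

lemma dP2 : pderiv 2 ((4 * X 0 * X 2 + X 1 ^ 2) * X 5 + 2 * X 0 * X 4 ^ 2 +
      2 * X 3 * X 4 * X 1 - 2 * X 2 * X 3 ^ 2 : MvPolynomial (Fin 6) ℂ) = 4*X 0*X 5 - 2*X 3^2 := by
  simp [pderiv_mul, pderiv_pow, pderiv_X, Pi.single_apply,
    (map_ofNat (C : ℂ →+* MvPolynomial (Fin 6) ℂ) 4).symm,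
    (map_ofNat (C : ℂ →+* MvPolynomial (Fin 6) ℂ) 2).symm, pderiv_C,
    show (C 4 : MvPolynomial (Fin 6) ℂ) = C 2 * C 2 by rw [← map_mul]; norm_num]
  try ring

lemma dP3 : pderiv 3 ((4 * X 0 * X 2 + X 1 ^ 2) * X 5 + 2 * X 0 * X 4 ^ 2 +
      2 * X 3 * X 4 * X 1 - 2 * X 2 * X 3 ^ 2 : MvPolynomial (Fin 6) ℂ) = 2*X 4*X 1 - 4*X 2*X 3 := by
  simp [pderiv_mul, pderiv_pow, pderiv_X, Pi.single_apply,
    (map_ofNat (C : ℂ →+* MvPolynomial (Fin 6) ℂ) 4).symm,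
    (map_ofNat (C : ℂ →+* MvPolynomial (Fin 6) ℂ) 2).symm, pderiv_C,
    show (C 4 : MvPolynomial (Fin 6) ℂ) = C 2 * C 2 by rw [← map_mul]; norm_num]
  try ring

lemma dP4 : pderiv 4 ((4 * X 0 * X 2 + X 1 ^ 2) * X 5 + 2 * X 0 * X 4 ^ 2 +
      2 * X 3 * X 4 * X 1 - 2 * X 2 * X 3 ^ 2 : MvPolynomial (Fin 6) ℂ) = 4*X 0*X 4 + 2*X 3*X 1 := by
  simp [pderiv_mul, pderiv_pow, pderiv_X, Pi.single_apply,
    (map_ofNat (C : ℂ →+* MvPolynomial (Fin 6) ℂ) 4).symm,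
    (map_ofNat (C : ℂ →+* MvPolynomial (Fin 6) ℂ) 2).symm, pderiv_C,
    show (C 4 : MvPolynomial (Fin 6) ℂ) = C 2 * C 2 by rw [← map_mul]; norm_num]
  try ring

lemma dP5 : pderiv 5 ((4 * X 0 * X 2 + X 1 ^ 2) * X 5 + 2 * X 0 * X 4 ^ 2 +
      2 * X 3 * X 4 * X 1 - 2 * X 2 * X 3 ^ 2 : MvPolynomial (Fin 6) ℂ) = 4*X 0*X 2 + X 1^2 := by
  simp [pderiv_mul, pderiv_pow, pderiv_X, Pi.single_apply,
    (map_ofNat (C : ℂ →+* MvPolynomial (Fin 6) ℂ) 4).symm,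
    (map_ofNat (C : ℂ →+* MvPolynomial (Fin 6) ℂ) 2).symm, pderiv_C,
    show (C 4 : MvPolynomial (Fin 6) ℂ) = C 2 * C 2 by rw [← map_mul]; norm_num]
  try ring

/-- For the centralizer of a minimal nilpotent element of `sp₄(ℂ)`
(the Lie algebra above), the elements `F₁ = e` and
`F₂ = (4EF + H²)e + 2Ev² + 2uvH - 2Fu²` of `S(g)` are invariant under the adjoint
action, i.e. they lie in the Poisson center: `{x, Fᵢ} = 0` for every `x ∈ g`. -/
theorem stmt17 (F1 F2 : MvPolynomial (Fin 6) ℂ)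
    (hF1 : F1 = X 5)
    (hF2 : F2 = (4 * X 0 * X 2 + X 1 ^ 2) * X 5 + 2 * X 0 * X 4 ^ 2 +
      2 * X 3 * X 4 * X 1 - 2 * X 2 * X 3 ^ 2) :
    ∀ k : Fin 6, poissonBr (X k) F1 = 0 ∧ poissonBr (X k) F2 = 0 := by
  subst hF1 hF2
  intro k
  constructor <;>
  · fin_cases k <;>
    · simp only [poissonBr, Fin.sum_univ_six, sm00, sm01, sm02, sm03, sm04, sm05, sm10, sm11, sm12, sm13, sm14, sm15, sm20, sm21, sm22, sm23, sm24, sm25, sm30, sm31, sm32, sm33, sm34, sm35, sm40, sm41, sm42, sm43, sm44, sm45, sm50, sm51, sm52, sm53, sm54, sm55, dP0, dP1, dP2, dP3, dP4, dP5, pderiv_X, Pi.single_apply]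
      try simp only [Fin.reduceEq, if_true, if_false, reduceIte]
      try ring
end
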